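/- Let P_k: {0,1}^k → [0,1] for 1 ≤ k ≤ N be a consistent family of symmetric probability functions (i.e., summing the last argument of P_{k+1} over {0,1} gives P_k). Define correlation functions recursively: G_1 := P_1 and G_k(r_1,...,r_k) := P_k(r_1,...,r_k) minus the sum over all partitions of the argument set {r_1,...,r_k} into at least two blocks of the product of G-functions over the blocks. Then for every k ≥ 2 and all r_2,...,r_k ∈ {0,1}: G_k(1,r_2,...,r_k) + G_k(0,r_2,...,r_k) = 0. -/

import Mathlib

/-!
Strong induction on `k`. Summing the recursion over the first argument, the `P`-terms give
`P_{k-1}(r_2,…,r_k)` by symmetry and consistency. In a partition with at least two blocks only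
the block containing the first index sees `r_1`: if that block has size at least two its
`G`-factor sums to `0` by induction, and if it is a singleton it sums to
`G_1(1) + G_1(0) = P_0 = 1`. The partition terms therefore add up to the sum over all partitions
of the remaining `k - 1` indices, which is `P_{k-1}(r_2,…,r_k)` again by the recursion.
-/

open Finset
open scoped Classical

/-- The sum, over all set partitions of `{1,…,k}` into at least two blocks, of the
product over the blocks `B` of `G_{|B|}` evaluated at the arguments `(r_i)_{i∈B}`,
taken in increasing index order. -/
noncomputable def partSum (G : (k : ℕ) → (Fin k → Bool) → ℝ) (k : ℕ)
    (r : Fin k → Bool) : ℝ :=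
  ∑ π : Finset (Finset (Fin k)),
    if ((∀ B ∈ π, B.Nonempty) ∧ (∀ i : Fin k, ∃! B, B ∈ π ∧ i ∈ B)) ∧ 2 ≤ π.card then
      ∏ B ∈ π, G B.card (fun j => r (B.orderIsoOfFin rfl j).1)
    else 0

open Function

section SetPartition

variable {α : Type*} {π : Finset (Finset α)} {B C : Finset α}

def IsSetPartition (π : Finset (Finset α)) : Prop :=
  (∀ B ∈ π, B.Nonempty) ∧ ∀ i, ∃! B, B ∈ π ∧ i ∈ B

namespace IsSetPartition

lemma of_exists_mem (hne : ∀ B ∈ π, B.Nonempty) (hcover : ∀ i, ∃ B ∈ π, i ∈ B)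
    (hdisj : ∀ B ∈ π, ∀ C ∈ π, ∀ i ∈ B, i ∈ C → B = C) : IsSetPartition π :=
  ⟨hne, fun i ↦
    let ⟨B, hB, hiB⟩ := hcover i
    ⟨B, ⟨hB, hiB⟩, fun C hC ↦ hdisj C hC.1 B hB i hC.2 hiB⟩⟩

lemma exists_mem (hπ : IsSetPartition π) (i : α) : ∃ B ∈ π, i ∈ B :=
  let ⟨B, hB, _⟩ := hπ.2 i
  ⟨B, hB⟩

lemma eq_of_mem_of_mem (hπ : IsSetPartition π) (hB : B ∈ π) (hC : C ∈ π) {i : α}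
    (hiB : i ∈ B) (hiC : i ∈ C) : B = C :=
  (hπ.2 i).unique ⟨hB, hiB⟩ ⟨hC, hiC⟩

lemma card_le_one [Subsingleton α] (hπ : IsSetPartition π) : #π ≤ 1 :=
  Finset.card_le_one.2 fun B hB C hC ↦
    let ⟨i, hi⟩ := hπ.1 B hB
    let ⟨j, hj⟩ := hπ.1 C hC
    hπ.eq_of_mem_of_mem hB hC hi (Subsingleton.elim j i ▸ hj)

lemma card_lt_of_two_le_card [Fintype α] (hπ : IsSetPartition π) (hcard : 2 ≤ #π)
    (hB : B ∈ π) : #B < Fintype.card α := by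
  obtain ⟨C, hC, hCB⟩ := exists_mem_ne hcard B
  obtain ⟨i, hi⟩ := hπ.1 C hC
  exact card_lt_univ_of_notMem fun hiB ↦ hCB (hπ.eq_of_mem_of_mem hC hB hi hiB)

lemma two_le_card_of_singleton_mem (hπ : IsSetPartition π) {a b : α} (hab : a ≠ b)
    (ha : {a} ∈ π) : 2 ≤ #π := by
  obtain ⟨B, hB, hbB⟩ := hπ.exists_mem b
  exact one_lt_card.2 ⟨{a}, ha, B, hB, fun h ↦ hab (mem_singleton.1 (h ▸ hbB)).symm⟩

end IsSetPartition

lemma isSetPartition_and_card_lt_two_iff [Fintype α] [Nonempty α] :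
    IsSetPartition π ∧ #π < 2 ↔ π = {univ} := by
  refine ⟨fun ⟨hπ, hcard⟩ ↦ ?_, ?_⟩
  · obtain ⟨B, hB, -⟩ := hπ.exists_mem (Classical.arbitrary α)
    obtain ⟨C, rfl⟩ := card_eq_one.1 (le_antisymm (by omega) (card_pos.2 ⟨B, hB⟩))
    refine congrArg _ (eq_univ_of_forall fun i ↦ ?_)
    obtain ⟨D, hD, hiD⟩ := hπ.exists_mem i
    rwa [mem_singleton.1 hD] at hiD
  · rintro rfl
    refine ⟨.of_exists_mem ?_ (fun i ↦ ⟨univ, mem_singleton_self _, mem_univ i⟩) ?_, by simp⟩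
    · simp [univ_nonempty]
    · simp

end SetPartition

section BlockProd

variable {α β γ R : Type*} [LinearOrder α] [LinearOrder β]

lemma apply_card_comp_orderEmbOfFin {δ : Type*} (G : (k : ℕ) → (Fin k → γ) → δ) (r : α → γ)
    (B : Finset α) {k : ℕ} (h : #B = k) :
    G #B (r ∘ B.orderEmbOfFin rfl) = G k (r ∘ B.orderEmbOfFin h) := by
  subst h
  rfl

lemma orderEmbOfFin_map (f : α ↪o β) (B : Finset α) {k : ℕ} (h : #(B.map f.toEmbedding) = k) :
    (B.map f.toEmbedding).orderEmbOfFin h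
      = (B.orderEmbOfFin ((card_map _).symm.trans h)).trans f :=
  (orderEmbOfFin_unique' h fun x ↦ mem_map_of_mem f.toEmbedding (orderEmbOfFin_mem B _ x)).symm

lemma update_comp_orderEmbOfFin_of_isLeast (r : α → γ) (B : Finset α) {a : α}
    (ha : IsLeast (B : Set α) a) {c : ℕ} (h : #B = c + 1) (x : γ) :
    update r a x ∘ B.orderEmbOfFin h = update (r ∘ B.orderEmbOfFin h) 0 x := by
  have h0 : B.orderEmbOfFin h 0 = a :=
    (orderEmbOfFin_zero h c.succ_pos).trans ((isLeast_min' B _).unique ha)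
  rw [← h0]
  exact update_comp_eq_of_injective r (B.orderEmbOfFin h).injective 0 x

variable [CommMonoid R] (G : (k : ℕ) → (Fin k → γ) → R)

def blockProd (r : α → γ) (π : Finset (Finset α)) : R :=
  ∏ B ∈ π, G #B (r ∘ B.orderEmbOfFin rfl)

lemma blockProd_map (f : α ↪o β) (r : β → γ) (π : Finset (Finset α)) :
    blockProd G r (π.map (mapEmbedding f.toEmbedding).toEmbedding) = blockProd G (r ∘ f) π := by
  rw [blockProd, prod_map]
  refine prod_congr rfl fun B _ ↦ ?_
  rw [RelEmbedding.coe_toEmbedding, mapEmbedding_apply,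
    apply_card_comp_orderEmbOfFin G r _ (card_map _), orderEmbOfFin_map]
  rfl

lemma blockProd_update_eq_mul {π : Finset (Finset α)} (hπ : IsSetPartition π) {B : Finset α}
    (hB : B ∈ π) {a : α} (ha : a ∈ B) (r : α → γ) (x : γ) :
    blockProd G (update r a x) π
      = G #B (update r a x ∘ B.orderEmbOfFin rfl) * blockProd G r (π.erase B) := by
  rw [blockProd, ← mul_prod_erase _ _ hB, blockProd]
  refine congrArg _ (prod_congr rfl fun C hC ↦ ?_)
  refine congrArg _ (update_comp_eq_of_forall_ne _ _ fun j hj ↦ ?_)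
  have haC : a ∈ C := hj ▸ orderEmbOfFin_mem C rfl j
  exact ne_of_mem_erase hC (hπ.eq_of_mem_of_mem (mem_of_mem_erase hC) hB haC ha)

end BlockProd

section PartitionSum

variable {α γ R : Type*} [Fintype α] [LinearOrder α] [CommSemiring R]

noncomputable def partitionSum (G : (k : ℕ) → (Fin k → γ) → R) (r : α → γ) : R :=
  ∑ π with IsSetPartition π, blockProd G r π

end PartitionSum

section ConsZeroBlock

variable {m : ℕ}

def succBlocks (π : Finset (Finset (Fin m))) : Finset (Finset (Fin (m + 1))) :=
  π.map (mapEmbedding (Fin.succOrderEmb m).toEmbedding).toEmbedding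

lemma blockProd_succBlocks {γ R : Type*} [CommMonoid R] (G : (k : ℕ) → (Fin k → γ) → R)
    (r : Fin (m + 1) → γ) (π : Finset (Finset (Fin m))) :
    blockProd G r (succBlocks π) = blockProd G (Fin.tail r) π :=
  blockProd_map G (Fin.succOrderEmb m) r π

def consZeroBlock (π : Finset (Finset (Fin m))) : Finset (Finset (Fin (m + 1))) :=
  insert {0} (succBlocks π)

lemma mem_consZeroBlock {π : Finset (Finset (Fin m))} {C : Finset (Fin (m + 1))} :
    C ∈ consZeroBlock π ↔ C = {0} ∨ ∃ B ∈ π, B.map (Fin.succEmb m) = C := by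
  simp [consZeroBlock, succBlocks]

lemma erase_consZeroBlock (π : Finset (Finset (Fin m))) :
    (consZeroBlock π).erase {0} = succBlocks π := by
  refine erase_insert fun h ↦ ?_
  obtain ⟨B, -, hB⟩ := mem_map.1 h
  have h0 : (0 : Fin (m + 1)) ∈ B.map (Fin.succEmb m) := by
    rw [← mapEmbedding_apply]
    exact hB ▸ mem_singleton_self 0
  simp [Fin.succ_ne_zero] at h0

lemma consZeroBlock_injective : Injective (consZeroBlock (m := m)) := fun π π' h ↦ by
  simpa [erase_consZeroBlock, succBlocks] using congrArg (erase · {0}) h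

lemma isSetPartition_consZeroBlock_iff {π : Finset (Finset (Fin m))} :
    IsSetPartition (consZeroBlock π) ↔ IsSetPartition π := by
  have hmem : ∀ B ∈ π, B.map (Fin.succEmb m) ∈ consZeroBlock π := fun B hB ↦
    mem_consZeroBlock.2 (.inr ⟨B, hB, rfl⟩)
  constructor
  · intro hπ
    refine .of_exists_mem (fun B hB ↦ map_nonempty.1 (hπ.1 _ (hmem B hB))) (fun i ↦ ?_)
      fun B hB C hC i hiB hiC ↦ ?_
    · obtain ⟨C, hC, hiC⟩ := hπ.exists_mem i.succ
      obtain rfl | ⟨B, hB, rfl⟩ := mem_consZeroBlock.1 hC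
      · simp [Fin.succ_ne_zero] at hiC
      · exact ⟨B, hB, by simpa using hiC⟩
    · refine map_injective (Fin.succEmb m) (hπ.eq_of_mem_of_mem (hmem B hB) (hmem C hC)
        (i := i.succ) ?_ ?_) <;> simpa
  · intro hπ
    refine .of_exists_mem (fun C hC ↦ ?_) (fun i ↦ ?_) fun C hC D hD i hiC hiD ↦ ?_
    · obtain rfl | ⟨B, hB, rfl⟩ := mem_consZeroBlock.1 hC
      · exact singleton_nonempty 0
      · exact (hπ.1 B hB).map
    · induction i using Fin.cases with
      | zero => exact ⟨{0}, mem_insert_self _ _, mem_singleton_self 0⟩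
      | succ i =>
        obtain ⟨B, hB, hiB⟩ := hπ.exists_mem i
        exact ⟨_, hmem B hB, by simpa⟩
    · obtain rfl | ⟨B, hB, rfl⟩ := mem_consZeroBlock.1 hC <;>
        obtain rfl | ⟨B', hB', rfl⟩ := mem_consZeroBlock.1 hD
      · rfl
      · simp [mem_singleton.1 hiC, Fin.succ_ne_zero] at hiD
      · simp [mem_singleton.1 hiD, Fin.succ_ne_zero] at hiC
      · obtain ⟨j, hjB, rfl⟩ := mem_map.1 hiC
        exact congrArg _ (hπ.eq_of_mem_of_mem hB hB' hjB ((mem_map' _).1 hiD))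

lemma IsSetPartition.exists_consZeroBlock_eq {π : Finset (Finset (Fin (m + 1)))}
    (hπ : IsSetPartition π) (h0 : {0} ∈ π) : ∃ π', consZeroBlock π' = π := by
  have hsub : π.erase {0} ⊆ succBlocks univ := by
    intro B hB
    have h0B : (0 : Fin (m + 1)) ∉ B := fun h ↦
      ne_of_mem_erase hB (hπ.eq_of_mem_of_mem (mem_of_mem_erase hB) h0 h (mem_singleton_self 0))
    have hsucc : B ⊆ univ.map (Fin.succEmb m) := fun x hx ↦ by
      simpa [Fin.exists_succ_eq] using ne_of_mem_of_not_mem hx h0B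
    obtain ⟨B', -, rfl⟩ := subset_map_iff.1 hsucc
    exact mem_map.2 ⟨B', mem_univ _, rfl⟩
  obtain ⟨π', -, hπ'⟩ := subset_map_iff.1 hsub
  exact ⟨π', by rw [consZeroBlock, succBlocks, ← hπ', insert_erase h0]⟩

lemma sum_isSetPartition_erase_singleton_zero {M : Type*} [AddCommMonoid M]
    (F : Finset (Finset (Fin (m + 1))) → M) :
    ∑ π with IsSetPartition π ∧ {0} ∈ π, F (π.erase {0})
      = ∑ π with IsSetPartition π, F (succBlocks π) := by
  symm
  refine sum_nbij consZeroBlock (fun π hπ ↦ ?_) consZeroBlock_injective.injOn (fun π hπ ↦ ?_)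
    fun π _ ↦ by rw [erase_consZeroBlock]
  · simp only [mem_filter, mem_univ, true_and] at hπ ⊢
    exact ⟨isSetPartition_consZeroBlock_iff.2 hπ, mem_insert_self _ _⟩
  · simp only [coe_filter, mem_univ, true_and, Set.mem_ofPred_eq] at hπ
    obtain ⟨π', rfl⟩ := hπ.1.exists_consZeroBlock_eq hπ.2
    exact ⟨π', by simpa using isSetPartition_consZeroBlock_iff.1 hπ.1, rfl⟩

end ConsZeroBlock

section Correlation

variable (G : (k : ℕ) → (Fin k → Bool) → ℝ)

lemma partSum_eq_sum_filter (n : ℕ) (r : Fin n → Bool) :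
    partSum G n r = ∑ π with IsSetPartition π ∧ 2 ≤ #π, blockProd G r π := by
  rw [partSum, sum_filter]
  exact sum_congr rfl fun π _ ↦ if_congr Iff.rfl rfl rfl

lemma partSum_one (r : Fin 1 → Bool) : partSum G 1 r = 0 := by
  rw [partSum_eq_sum_filter]
  refine sum_eq_zero fun π hπ ↦ ?_
  have ⟨hπ, hcard⟩ := (mem_filter.1 hπ).2
  have := hπ.card_le_one
  omega

lemma partitionSum_eq_add_partSum {n : ℕ} (hn : 0 < n) (r : Fin n → Bool) :
    partitionSum G r = G n r + partSum G n r := by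
  have : Nonempty (Fin n) := ⟨⟨0, hn⟩⟩
  have hsingle : univ.filter (fun π : Finset (Finset (Fin n)) ↦ IsSetPartition π ∧ ¬2 ≤ #π)
      = {{univ}} := by
    ext π
    simpa only [mem_filter, mem_univ, true_and, mem_singleton, not_le] using
      isSetPartition_and_card_lt_two_iff
  rw [partitionSum, partSum_eq_sum_filter, ← sum_filter_add_sum_filter_not _ (fun π ↦ 2 ≤ #π),
    filter_filter, filter_filter, hsingle, sum_singleton, blockProd, prod_singleton,
    apply_card_comp_orderEmbOfFin G r univ (card_fin n), add_comm]
  rw [← orderEmbOfFin_unique (card_fin n) (fun x ↦ mem_univ x) strictMono_id]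
  rfl

lemma blockProd_update_zero_add {m : ℕ}
    (hG₁ : ∀ s : Fin 1 → Bool, G 1 (update s 0 true) + G 1 (update s 0 false) = 1)
    (ih : ∀ c, 1 ≤ c → c < m → ∀ s : Fin (c + 1) → Bool,
      G (c + 1) (update s 0 true) + G (c + 1) (update s 0 false) = 0)
    {π : Finset (Finset (Fin (m + 1)))} (hπ : IsSetPartition π) (hcard : 2 ≤ #π)
    (r : Fin (m + 1) → Bool) :
    blockProd G (update r 0 true) π + blockProd G (update r 0 false) π
      = if {0} ∈ π then blockProd G r (π.erase {0}) else 0 := by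
  obtain ⟨B, hB, h0B⟩ := hπ.exists_mem 0
  obtain ⟨c, hc⟩ : ∃ c, #B = c + 1 := Nat.exists_eq_add_one.2 (card_pos.2 ⟨0, h0B⟩)
  have hcm : c < m := by
    simpa [hc] using hπ.card_lt_of_two_le_card hcard hB
  have hblock : ∀ x, G #B (update r 0 x ∘ B.orderEmbOfFin rfl)
      = G (c + 1) (update (r ∘ B.orderEmbOfFin hc) 0 x) := fun x ↦ by
    rw [apply_card_comp_orderEmbOfFin G _ B hc,
      update_comp_orderEmbOfFin_of_isLeast r B ⟨h0B, fun i _ ↦ Fin.zero_le i⟩]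
  rw [blockProd_update_eq_mul G hπ hB h0B, blockProd_update_eq_mul G hπ hB h0B, ← add_mul,
    hblock, hblock]
  rcases Nat.eq_zero_or_pos c with rfl | hc₁
  · obtain rfl : B = {0} := by
      obtain ⟨a, rfl⟩ := card_eq_one.1 hc
      rw [mem_singleton.1 h0B]
    rw [if_pos hB, hG₁, one_mul]
  · have h0 : {0} ∉ π := fun h ↦ by
      have := hπ.eq_of_mem_of_mem h hB (mem_singleton_self 0) h0B
      simp [← this] at hc
      omega
    rw [if_neg h0, ih c hc₁ hcm, zero_mul]

lemma partSum_update_zero_add {m : ℕ} (hm : 1 ≤ m)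
    (hG₁ : ∀ s : Fin 1 → Bool, G 1 (update s 0 true) + G 1 (update s 0 false) = 1)
    (ih : ∀ c, 1 ≤ c → c < m → ∀ s : Fin (c + 1) → Bool,
      G (c + 1) (update s 0 true) + G (c + 1) (update s 0 false) = 0)
    (r : Fin (m + 1) → Bool) :
    partSum G (m + 1) (update r 0 true) + partSum G (m + 1) (update r 0 false)
      = partitionSum G (Fin.tail r) := by
  have h01 : (0 : Fin (m + 1)) ≠ ⟨1, by omega⟩ := by simp [Fin.ext_iff]
  rw [partSum_eq_sum_filter, partSum_eq_sum_filter, ← sum_add_distrib]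
  calc _ = ∑ π with IsSetPartition π ∧ 2 ≤ #π,
        if {0} ∈ π then blockProd G r (π.erase {0}) else 0 :=
        sum_congr rfl fun π hπ ↦
          blockProd_update_zero_add G hG₁ ih (mem_filter.1 hπ).2.1 (mem_filter.1 hπ).2.2 r
    _ = ∑ π with IsSetPartition π ∧ {0} ∈ π, blockProd G r (π.erase {0}) := by
        rw [← sum_filter, filter_filter]
        refine sum_congr (filter_congr fun π _ ↦ ?_) fun _ _ ↦ rfl
        exact ⟨fun h ↦ ⟨h.1.1, h.2⟩,
          fun h ↦ ⟨⟨h.1, h.1.two_le_card_of_singleton_mem h01 h.2⟩, h.2⟩⟩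
    _ = ∑ π with IsSetPartition π, blockProd G r (succBlocks π) :=
        sum_isSetPartition_erase_singleton_zero _
    _ = partitionSum G (Fin.tail r) := sum_congr rfl fun π _ ↦ blockProd_succBlocks G r π

end Correlation

lemma add_update_zero_eq_of_symm_of_consistent (P : (k : ℕ) → (Fin k → Bool) → ℝ)
    (hsymP : ∀ (k : ℕ) (σ : Equiv.Perm (Fin k)) (r : Fin k → Bool), P k r = P k (r ∘ σ))
    (hconsist : ∀ (k : ℕ) (r : Fin k → Bool),
      P (k + 1) (Fin.snoc r true) + P (k + 1) (Fin.snoc r false) = P k r)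
    (m : ℕ) (r : Fin (m + 1) → Bool) :
    P (m + 1) (update r 0 true) + P (m + 1) (update r 0 false) = P m (Fin.tail r) := by
  have hsnoc : ∀ x, P (m + 1) (update r 0 x) = P (m + 1) (Fin.snoc (Fin.tail r) x) :=
    fun x ↦ by
      rw [Fin.snoc_eq_cons_rotate, ← Fin.update_cons_zero (r 0), Fin.cons_self_tail]
      exact hsymP _ _ _
  rw [hsnoc, hsnoc, hconsist]

theorem stmt2 (P : (k : ℕ) → (Fin k → Bool) → ℝ)
    -- `P` is a family of symmetric probability functions:
    (hsymP : ∀ (k : ℕ) (σ : Equiv.Perm (Fin k)) (r : Fin k → Bool), P k r = P k (r ∘ σ))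
    (hnorm : ∀ r : Fin 0 → Bool, P 0 r = 1)
    -- consistency: summing the last argument of `P_{k+1}` over `{0,1}` gives `P_k`:
    (hconsist : ∀ (k : ℕ) (r : Fin k → Bool),
      P (k+1) (Fin.snoc r true) + P (k+1) (Fin.snoc r false) = P k r)
    -- `G` is the family of correlation functions, defined recursively:
    (G : (k : ℕ) → (Fin k → Bool) → ℝ)
    (hG : ∀ (k : ℕ), 1 ≤ k → ∀ r : Fin k → Bool, G k r = P k r - partSum G k r)
    (k : ℕ) (hk : 2 ≤ k) (r : Fin k → Bool) :
    G k (Function.update r ⟨0, by omega⟩ true) +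
      G k (Function.update r ⟨0, by omega⟩ false) = 0 := by
  have hP := add_update_zero_eq_of_symm_of_consistent P hsymP hconsist
  have hG₁ : ∀ s : Fin 1 → Bool, G 1 (update s 0 true) + G 1 (update s 0 false) = 1 :=
    fun s ↦ by
      rw [hG 1 le_rfl, hG 1 le_rfl, partSum_one, partSum_one, ← hnorm (Fin.tail s), ← hP 0 s]
      ring
  induction k using Nat.strong_induction_on with
  | _ k ih =>
    obtain ⟨m, rfl⟩ : ∃ m, k = m + 1 := ⟨k - 1, by omega⟩
    have hpart := partSum_update_zero_add G (by omega) hG₁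
      (fun c hc hcm s ↦ ih (c + 1) (by omega) (by omega) s) r
    rw [partitionSum_eq_add_partSum G (by omega : 0 < m), hG m (by omega)] at hpart
    show G (m + 1) (update r 0 true) + G (m + 1) (update r 0 false) = 0
    rw [hG _ (by omega), hG _ (by omega)]
    linarith [hP m r]
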